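/- For every t ∈ (−1,1), the derivative of f₋ satisfies f₋'(t) = (e^{−α(t)}/√(2π)) · √(2α(t)) / (1+t). -/

import Mathlib

open Real Set

open MeasureTheory Filter

/-- The standard Gaussian CDF. -/
noncomputable def Phi (x : ℝ) : ℝ := ∫ u in Set.Iic x, Real.exp (-u ^ 2 / 2) / Real.sqrt (2 * Real.pi)

/-- The smooth extension of `ln(1+t)/(t(2+t))` on `(−1,1)`, with `α(0) = 1/2`. -/
noncomputable def alphaFn (t : ℝ) : ℝ :=
  if t = 0 then 1 / 2 else Real.log (1 + t) / (t * (2 + t))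

/-- `x₋(t) = −(1+t)·√(2α(t))`. -/
noncomputable def xMinus (t : ℝ) : ℝ := -(1 + t) * Real.sqrt (2 * alphaFn t)

/-- `x₊(t) = (1−t)·√(2α(−t))`. -/
noncomputable def xPlus (t : ℝ) : ℝ := (1 - t) * Real.sqrt (2 * alphaFn (-t))

/-- `f₋(t) = Φ(x₋(t)/(1+t)) − Φ(x₋(t))`. -/
noncomputable def fMinus (t : ℝ) : ℝ := Phi (xMinus t / (1 + t)) - Phi (xMinus t)

/-- `f₊(t) = Φ(x₊(t)/(1−t)) − Φ(x₊(t))`. -/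
noncomputable def fPlus (t : ℝ) : ℝ := Phi (xPlus t / (1 - t)) - Phi (xPlus t)

lemma gauss_integrable :
    Integrable (fun u : ℝ => Real.exp (-u ^ 2 / 2) / Real.sqrt (2 * Real.pi)) := by
  have h := (integrable_exp_neg_mul_sq (by norm_num : (0:ℝ) < 1/2)).div_const
    (Real.sqrt (2 * Real.pi))
  convert h using 2 with u
  ring_nf

lemma gauss_continuous :
    Continuous (fun u : ℝ => Real.exp (-u ^ 2 / 2) / Real.sqrt (2 * Real.pi)) := by
  fun_prop

lemma hasDerivAt_Phi (x : ℝ) :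
    HasDerivAt Phi (Real.exp (-x ^ 2 / 2) / Real.sqrt (2 * Real.pi)) x := by
  have key : Phi = fun y => Phi 0 + ∫ u in (0:ℝ)..y,
      Real.exp (-u ^ 2 / 2) / Real.sqrt (2 * Real.pi) := by
    funext y
    rw [← intervalIntegral.integral_Iic_sub_Iic gauss_integrable.integrableOn
      gauss_integrable.integrableOn]
    simp [Phi]
  rw [key]
  exact ((intervalIntegral.integral_hasDerivAt_right gauss_integrable.intervalIntegrable
    (gauss_continuous.stronglyMeasurableAtFilter _ _) gauss_continuous.continuousAt).const_add _)

lemma alphaFn_pos {t : ℝ} (ht : t ∈ Set.Ioo (-1 : ℝ) 1) : 0 < alphaFn t := by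
  obtain ⟨h1, h2⟩ := ht
  rcases lt_trichotomy t 0 with h | h | h
  · rw [alphaFn, if_neg h.ne]
    apply div_pos_of_neg_of_neg
    · exact Real.log_neg (by linarith) (by linarith)
    · nlinarith
  · simp [alphaFn, h]
  · rw [alphaFn, if_neg h.ne']
    apply div_pos (Real.log_pos (by linarith)) (by nlinarith)

lemma alphaFn_mul (t : ℝ) : alphaFn t * (t * (2 + t)) = Real.log (1 + t) := by
  rcases eq_or_ne t 0 with h | h
  · simp [alphaFn, h]
  rcases eq_or_ne t (-2) with h2 | h2
  · norm_num [alphaFn, h, h2, Real.log_neg_eq_log]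
  · rw [alphaFn, if_neg h, div_mul_cancel₀]
    intro hc
    rcases mul_eq_zero.1 hc with h' | h'
    · exact h h'
    · exact h2 (by linarith)

lemma alphaFn_diff_ne {t : ℝ} (h1 : -1 < t) (h0 : t ≠ 0) :
    DifferentiableAt ℝ alphaFn t := by
  have hev : (fun s => Real.log (1 + s) / (s * (2 + s))) =ᶠ[nhds t] alphaFn := by
    filter_upwards [eventually_ne_nhds h0] with s hs
    simp [alphaFn, hs]
  refine DifferentiableAt.congr_of_eventuallyEq ?_ hev.symm
  have hd : DifferentiableAt ℝ (fun s : ℝ => Real.log (1 + s)) t :=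
    ((differentiableAt_const (1:ℝ)).fun_add differentiableAt_fun_id).log (by linarith)
  refine hd.div (differentiableAt_fun_id.mul ((differentiableAt_const (2:ℝ)).add
    differentiableAt_fun_id)) ?_
  intro hc
  rcases mul_eq_zero.1 hc with h' | h'
  · exact h0 h'
  · linarith

lemma alphaFn_hasDerivAt_zero : HasDerivAt alphaFn (-(1/2)) 0 := by
  rw [hasDerivAt_iff_tendsto_slope]
  have hb : ∀ᶠ s in nhdsWithin (0:ℝ) {(0:ℝ)}ᶜ, ‖slope alphaFn 0 s - (-(1/2))‖ ≤ 2 * |s| := by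
    have hmem : Set.Ioo (-(1/2):ℝ) (1/2) ∈ nhds (0:ℝ) := Ioo_mem_nhds (by norm_num) (by norm_num)
    filter_upwards [nhdsWithin_le_nhds hmem, self_mem_nhdsWithin] with s hs hs0
    have hs0 : s ≠ 0 := hs0
    obtain ⟨hsl, hsr⟩ := hs
    have h12 : |s| ≤ 1/2 := abs_le.2 ⟨by linarith, by linarith⟩
    have hR : |Real.log (1 + s) - s + s^2/2| ≤ 2 * |s|^3 := by
      have key := Real.abs_log_sub_add_sum_range_le (x := -s) (by rw [abs_neg]; linarith) 2
      have hsum : (∑ i ∈ Finset.range 2, (-s) ^ (i + 1) / (i + 1)) = -s + s^2/2 := by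
        simp [Finset.sum_range_succ]
        ring
      rw [hsum] at key
      have heq : Real.log (1 + s) - s + s^2/2 = -s + s^2/2 + Real.log (1 - -s) := by
        rw [sub_neg_eq_add]; ring
      rw [heq]
      calc |(-s + s^2/2 + Real.log (1 - -s))| ≤ |(-s)|^(2+1) / (1 - |(-s)|) := key
        _ = |s|^3 / (1 - |s|) := by rw [abs_neg]
        _ ≤ |s|^3 / (1/2) :=
            div_le_div_of_nonneg_left (by positivity) (by norm_num) (by linarith)
        _ = 2 * |s|^3 := by ring
    set R := Real.log (1 + s) - s + s^2/2 with hRdef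
    have hslope : slope alphaFn 0 s - (-(1/2)) = (2*R + s^3) / (2 * s^2 * (2 + s)) := by
      rw [slope_def_field, alphaFn, if_neg hs0, alphaFn, if_pos rfl, hRdef]
      have h1 : (1:ℝ) + s ≠ 0 := by linarith
      have h2 : (2:ℝ) + s ≠ 0 := by linarith
      field_simp
      ring
    rw [hslope, Real.norm_eq_abs, abs_div]
    have hs2 : 0 < s ^ 2 := by rcases hs0.lt_or_gt with h | h <;> nlinarith
    have hdpos : 0 < 2 * s^2 * (2 + s) := by nlinarith
    have hden : |2 * s^2 * (2 + s)| = 2 * s^2 * (2 + s) := abs_of_pos hdpos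
    have hden2 : (3:ℝ) * s^2 ≤ 2 * s^2 * (2 + s) := by nlinarith [sq_nonneg s]
    have hnum : |2*R + s^3| ≤ 5 * |s|^3 := by
      calc |2*R + s^3| ≤ |2*R| + |s^3| := abs_add_le _ _
        _ = 2*|R| + |s|^3 := by rw [abs_mul, abs_pow]; norm_num
        _ ≤ 5 * |s|^3 := by linarith
    rw [hden, div_le_iff₀ hdpos]
    calc |2*R + s^3| ≤ 5 * |s|^3 := hnum
      _ ≤ 2 * |s| * (3 * s^2) := by
          have h3 : |s|^3 = |s| * s^2 := by rw [pow_succ, sq_abs]; ring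
          rw [h3]; nlinarith [abs_nonneg s, sq_nonneg s]
      _ ≤ 2 * |s| * (2 * s^2 * (2 + s)) := by
          apply mul_le_mul_of_nonneg_left hden2 (by positivity)
  have h0 : Tendsto (fun s : ℝ => 2 * |s|) (nhdsWithin (0:ℝ) {(0:ℝ)}ᶜ) (nhds 0) := by
    have h : Tendsto (fun s : ℝ => 2 * |s|) (nhds 0) (nhds 0) := by
      have := (continuous_abs.tendsto (0:ℝ)).const_mul (2:ℝ)
      simpa using this
    exact h.mono_left nhdsWithin_le_nhds
  exact tendsto_sub_nhds_zero_iff.mp (squeeze_zero_norm' hb h0)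

theorem fMinus_hasDerivAt (t : ℝ) (ht : t ∈ Set.Ioo (-1 : ℝ) 1) :
    HasDerivAt fMinus
      (Real.exp (-alphaFn t) / Real.sqrt (2 * Real.pi) * (Real.sqrt (2 * alphaFn t) / (1 + t)))
      t := by
  obtain ⟨h1, h2⟩ := ht
  have h1t : (0:ℝ) < 1 + t := by linarith
  have hα : DifferentiableAt ℝ alphaFn t := by
    rcases eq_or_ne t 0 with h | h
    · subst h; exact alphaFn_hasDerivAt_zero.differentiableAt
    · exact alphaFn_diff_ne h1 h
  set a' := deriv alphaFn t with ha'
  have hαd : HasDerivAt alphaFn a' t := hα.hasDerivAt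
  have hapos : 0 < alphaFn t := alphaFn_pos ⟨h1, h2⟩
  set g := Real.sqrt (2 * alphaFn t) with hg
  have hgpos : 0 < g := Real.sqrt_pos.2 (by linarith)
  have hG : HasDerivAt (fun s => Real.sqrt (2 * alphaFn s)) (1 / (2 * g) * (2 * a')) t :=
    (Real.hasDerivAt_sqrt (by positivity)).comp t (hαd.const_mul 2)
  have hu : HasDerivAt (fun s : ℝ => -(1 + s)) (-1) t := by
    exact ((hasDerivAt_id t).const_add (1:ℝ)).fun_neg
  have F1 : HasDerivAt (fun s => Phi (-(Real.sqrt (2 * alphaFn s))))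
      (Real.exp (-(-g) ^ 2 / 2) / Real.sqrt (2 * Real.pi) * (-(1 / (2 * g) * (2 * a')))) t :=
    by have := (hasDerivAt_Phi (-g)).comp t hG.fun_neg; exact this
  have F2 : HasDerivAt (fun s => Phi (-(1 + s) * Real.sqrt (2 * alphaFn s)))
      (Real.exp (-(-(1 + t) * g) ^ 2 / 2) / Real.sqrt (2 * Real.pi) *
        ((-1) * g + -(1 + t) * (1 / (2 * g) * (2 * a')))) t :=
    by have := (hasDerivAt_Phi (-(1 + t) * g)).comp t (hu.fun_mul hG); exact this
  have hF := F1.sub F2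
  have hev : fMinus =ᶠ[nhds t] fun s =>
      Phi (-(Real.sqrt (2 * alphaFn s))) - Phi (-(1 + s) * Real.sqrt (2 * alphaFn s)) := by
    filter_upwards [eventually_gt_nhds (show (-1:ℝ) < t from h1)] with s hs
    have hs1 : (1:ℝ) + s ≠ 0 := by linarith
    simp only [fMinus, xMinus]
    rw [show -(1 + s) * Real.sqrt (2 * alphaFn s) / (1 + s)
        = -(Real.sqrt (2 * alphaFn s)) from by field_simp]
  have hmain := hF.congr_of_eventuallyEq hev
  refine hmain.congr_deriv (Eq.symm ?_)
  have hsq : g ^ 2 = 2 * alphaFn t := Real.sq_sqrt (by linarith)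
  have he1 : (-g : ℝ) ^ 2 = 2 * alphaFn t := by rw [neg_pow]; simp [hsq]
  have he2 : Real.exp (-(-(1 + t) * g) ^ 2 / 2) = Real.exp (-alphaFn t) / (1 + t) := by
    have h : (-(1 + t) * g) ^ 2 = (1 + t) ^ 2 * (2 * alphaFn t) := by ring_nf; rw [hsq]; ring
    have h2' : (1 + t) ^ 2 * alphaFn t = alphaFn t + Real.log (1 + t) := by
      have := alphaFn_mul t; nlinarith [this]
    rw [h, show -((1 + t) ^ 2 * (2 * alphaFn t)) / 2 = -((1 + t) ^ 2 * alphaFn t) from by ring,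
      h2', neg_add, Real.exp_add, Real.exp_neg (Real.log (1 + t)), Real.exp_log h1t]
    ring
  rw [he1, he2, show -(2 * alphaFn t) / 2 = -alphaFn t from by ring]
  have hπ : Real.sqrt (2 * Real.pi) ≠ 0 := by positivity
  field_simp
  ring
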